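/- arXiv:1401.7920 — 3 statements merged into one kernel-verified Lean document; each statement's English description precedes it below -/
import Mathlib

section
/- Suppose S₁ and S₂ are finite sets of nonzero product vectors in (ℂ²)^{⊗p} that are unextendible product bases (mutually orthogonal product vectors such that no nonzero product vector is orthogonal to all of them). Then the set S = {v ⊗ e₀ : v ∈ S₁} ∪ {w ⊗ e₁ : w ∈ S₂} ⊆ (ℂ²)^{⊗(p+1)} is an unextendible product basis, and |S| = |S₁| + |S₂|. -/
noncomputable section
open scoped Classical

/-- The product vector `v₁ ⊗ ⋯ ⊗ v_p` in `(ℂ²)^{⊗p}`, modelled as a function on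
multi-indices. -/
def prodVec {p : ℕ} (v : Fin p → Fin 2 → ℂ) : (Fin p → Fin 2) → ℂ :=
  fun x => ∏ j, v j (x j)

/-- The standard inner product on `(ℂ²)^{⊗p}` (conjugate-linear in the first slot). -/
def ip {p : ℕ} (a b : (Fin p → Fin 2) → ℂ) : ℂ :=
  ∑ x : Fin p → Fin 2, starRingEnd ℂ (a x) * b x

/-- `S` is an unextendible product basis of `(ℂ²)^{⊗p}`. -/
def IsUPB (p : ℕ) (S : Finset ((Fin p → Fin 2) → ℂ)) : Prop :=
  (∀ a ∈ S, ∃ v : Fin p → Fin 2 → ℂ, (∀ j, v j ≠ 0) ∧ a = prodVec v) ∧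
  (∀ a ∈ S, ∀ b ∈ S, a ≠ b → ip a b = 0) ∧
  ¬ ∃ z : Fin p → Fin 2 → ℂ, (∀ j, z j ≠ 0) ∧ ∀ a ∈ S, ip a (prodVec z) = 0

/-- Append one extra qubit in state `c` to a vector `a` of `(ℂ²)^{⊗p}`. -/
def tensAdd {p : ℕ} (a : (Fin p → Fin 2) → ℂ) (c : Fin 2 → ℂ) :
    (Fin (p + 1) → Fin 2) → ℂ :=
  fun x => a (fun j => x j.castSucc) * c (x (Fin.last p))

/-- The standard basis vector `|0⟩` of `ℂ²`. -/
def e0 : Fin 2 → ℂ := fun i => if i = 0 then 1 else 0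

/-- The standard basis vector `|1⟩` of `ℂ²`. -/
def e1 : Fin 2 → ℂ := fun i => if i = 1 then 1 else 0

lemma tensAdd_snoc {p : ℕ} (a : (Fin p → Fin 2) → ℂ) (c : Fin 2 → ℂ)
    (f : Fin p → Fin 2) (i : Fin 2) :
    tensAdd a c (Fin.snoc f i) = a f * c i := by
  simp [tensAdd]

def snocE (p : ℕ) : ((Fin p → Fin 2) × Fin 2) ≃ (Fin (p + 1) → Fin 2) where
  toFun fi := Fin.snoc fi.1 fi.2
  invFun x := (Fin.init x, x (Fin.last p))
  left_inv := by rintro ⟨f, i⟩; simp [Fin.init_snoc]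
  right_inv := by intro x; exact Fin.snoc_init_self x

lemma ip_tensAdd {p : ℕ} (a b : (Fin p → Fin 2) → ℂ) (c d : Fin 2 → ℂ) :
    ip (tensAdd a c) (tensAdd b d) = ip a b * ∑ i, starRingEnd ℂ (c i) * d i := by
  rw [ip, ip, ← Equiv.sum_comp (snocE p), Fintype.sum_prod_type]
  simp only [snocE, Equiv.coe_fn_mk, tensAdd_snoc, map_mul]
  rw [Finset.sum_mul_sum]
  refine Finset.sum_congr rfl fun f _ => Finset.sum_congr rfl fun i _ => ?_
  ring

lemma prodVec_snoc {p : ℕ} (v : Fin p → Fin 2 → ℂ) (c : Fin 2 → ℂ) :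
    prodVec (Fin.snoc v c) = tensAdd (prodVec v) c := by
  funext x
  simp [prodVec, tensAdd, Fin.prod_univ_castSucc]

lemma prodVec_ne_zero {p : ℕ} {v : Fin p → Fin 2 → ℂ} (h : ∀ j, v j ≠ 0) :
    prodVec v ≠ 0 := by
  intro h0
  have hx : ∀ j, ∃ i, v j i ≠ 0 := fun j => by
    by_contra hc; push_neg at hc; exact h j (funext hc)
  choose x hx using hx
  have := congrFun h0 x
  simp only [prodVec, Pi.zero_apply, Finset.prod_eq_zero_iff] at this
  obtain ⟨j, -, hj⟩ := this
  exact hx j hj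

lemma e0_ne_zero : e0 ≠ 0 := by
  intro h; have := congrFun h 0; simp [e0] at this

lemma e1_ne_zero : e1 ≠ 0 := by
  intro h; have := congrFun h 1; simp [e1] at this

lemma tensAdd_e0_ne_e1 {p : ℕ} {a b : (Fin p → Fin 2) → ℂ} (ha : a ≠ 0) :
    tensAdd a e0 ≠ tensAdd b e1 := by
  intro h
  obtain ⟨f, hf⟩ : ∃ f, a f ≠ 0 := by
    by_contra hc; push_neg at hc; exact ha (funext hc)
  have := congrFun h (Fin.snoc f 0)
  rw [tensAdd_snoc, tensAdd_snoc] at this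
  simp [e0, e1] at this
  exact hf this

lemma tensAdd_inj {p : ℕ} (c : Fin 2 → ℂ) (i : Fin 2) (hci : c i = 1) :
    Function.Injective (fun a : (Fin p → Fin 2) → ℂ => tensAdd a c) := by
  intro a b h
  funext f
  have := congrFun h (Fin.snoc f i)
  simp only [tensAdd_snoc, hci, mul_one] at this
  exact this

lemma nonzero_of_mem {p : ℕ} {S : Finset ((Fin p → Fin 2) → ℂ)} (h : IsUPB p S)
    {a : (Fin p → Fin 2) → ℂ} (ha : a ∈ S) : a ≠ 0 := by
  obtain ⟨v, hv, rfl⟩ := h.1 a ha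
  exact prodVec_ne_zero hv

theorem stmt_9 (p : ℕ) (S₁ S₂ : Finset ((Fin p → Fin 2) → ℂ))
    (h₁ : IsUPB p S₁) (h₂ : IsUPB p S₂) :
    IsUPB (p + 1)
      (S₁.image (fun a => tensAdd a e0) ∪ S₂.image (fun a => tensAdd a e1)) ∧
    (S₁.image (fun a => tensAdd a e0) ∪ S₂.image (fun a => tensAdd a e1)).card =
      S₁.card + S₂.card := by
  have he00 : (∑ i : Fin 2, starRingEnd ℂ (e0 i) * e0 i) = 1 := by
    simp [Fin.sum_univ_two, e0]
  have he11 : (∑ i : Fin 2, starRingEnd ℂ (e1 i) * e1 i) = 1 := by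
    simp [Fin.sum_univ_two, e1]
  have he01 : (∑ i : Fin 2, starRingEnd ℂ (e0 i) * e1 i) = 0 := by
    simp [Fin.sum_univ_two, e0, e1]
  have he10 : (∑ i : Fin 2, starRingEnd ℂ (e1 i) * e0 i) = 0 := by
    simp [Fin.sum_univ_two, e0, e1]
  have hdisj : Disjoint (S₁.image (fun a => tensAdd a e0))
      (S₂.image (fun a => tensAdd a e1)) := by
    rw [Finset.disjoint_left]
    rintro x hx hy
    rw [Finset.mem_image] at hx hy
    obtain ⟨a, ha, rfl⟩ := hx
    obtain ⟨b, hb, hab⟩ := hy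
    exact tensAdd_e0_ne_e1 (nonzero_of_mem h₁ ha) hab.symm
  refine ⟨⟨?_, ?_, ?_⟩, ?_⟩
  · intro x hx
    rw [Finset.mem_union, Finset.mem_image, Finset.mem_image] at hx
    rcases hx with ⟨a, ha, rfl⟩ | ⟨a, ha, rfl⟩
    · obtain ⟨v, hv, rfl⟩ := h₁.1 a ha
      refine ⟨Fin.snoc v e0, ?_, (prodVec_snoc v e0).symm⟩
      intro j
      refine Fin.lastCases ?_ ?_ j
      · simpa using e0_ne_zero
      · intro j; simpa using hv j
    · obtain ⟨v, hv, rfl⟩ := h₂.1 a ha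
      refine ⟨Fin.snoc v e1, ?_, (prodVec_snoc v e1).symm⟩
      intro j
      refine Fin.lastCases ?_ ?_ j
      · simpa using e1_ne_zero
      · intro j; simpa using hv j
  · intro x hx y hy hxy
    rw [Finset.mem_union, Finset.mem_image, Finset.mem_image] at hx hy
    rcases hx with ⟨a, ha, rfl⟩ | ⟨a, ha, rfl⟩ <;>
      rcases hy with ⟨b, hb, rfl⟩ | ⟨b, hb, rfl⟩
    · have hab : a ≠ b := fun h => hxy (by rw [h])
      rw [ip_tensAdd, he00, mul_one]
      exact h₁.2.1 a ha b hb hab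
    · rw [ip_tensAdd, he01, mul_zero]
    · rw [ip_tensAdd, he10, mul_zero]
    · have hab : a ≠ b := fun h => hxy (by rw [h])
      rw [ip_tensAdd, he11, mul_one]
      exact h₂.2.1 a ha b hb hab
  · rintro ⟨z, hz, hall⟩
    set z' : Fin p → Fin 2 → ℂ := Fin.init z with hz'
    set c : Fin 2 → ℂ := z (Fin.last p) with hc
    have hzdec : prodVec z = tensAdd (prodVec z') c := by
      conv_lhs => rw [← Fin.snoc_init_self z]
      exact prodVec_snoc _ _
    have hz'ne : ∀ j, z' j ≠ 0 := fun j => hz j.castSucc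
    have h1 : ∀ a ∈ S₁, ip a (prodVec z') * c 0 = 0 := by
      intro a ha
      have := hall (tensAdd a e0)
        (Finset.mem_union_left _ (Finset.mem_image_of_mem _ ha))
      rw [hzdec, ip_tensAdd] at this
      have hce : (∑ i : Fin 2, starRingEnd ℂ (e0 i) * c i) = c 0 := by
        simp [Fin.sum_univ_two, e0]
      rwa [hce] at this
    have h2 : ∀ a ∈ S₂, ip a (prodVec z') * c 1 = 0 := by
      intro a ha
      have := hall (tensAdd a e1)
        (Finset.mem_union_right _ (Finset.mem_image_of_mem _ ha))
      rw [hzdec, ip_tensAdd] at this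
      have hce : (∑ i : Fin 2, starRingEnd ℂ (e1 i) * c i) = c 1 := by
        simp [Fin.sum_univ_two, e1]
      rwa [hce] at this
    by_cases hc0 : c 0 = 0
    · have hc1 : c 1 ≠ 0 := by
        intro hc1
        apply hz (Fin.last p)
        funext i
        fin_cases i
        · exact hc0
        · exact hc1
      exact h₂.2.2 ⟨z', hz'ne, fun a ha =>
        (mul_eq_zero.1 (h2 a ha)).resolve_right hc1⟩
    · exact h₁.2.2 ⟨z', hz'ne, fun a ha =>
        (mul_eq_zero.1 (h1 a ha)).resolve_right hc0⟩
  · rw [Finset.card_union_of_disjoint hdisj,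
      Finset.card_image_of_injective _ (tensAdd_inj e0 0 (by simp [e0])),
      Finset.card_image_of_injective _ (tensAdd_inj e1 1 (by simp [e1]))]


end
end

section
/- For every integer p ≥ 7, the union I₁^p ∪ I₂^p ∪ I₃^p = I₀^{p+1}, where I₀^p = [∑_{k=4}^{p-1} f(k), 2^p − 6], I₁^p = [∑_{k=4}^{p} f(k), f(p) + 2^p − 6], I₂^p = [2∑_{k=4}^{p-1} f(k), 2^{p+1} − 12], and I₃^p = [2^p + ∑_{k=4}^{p-1} f(k), 2^{p+1} − 6] are intervals of integers. -/
def f (p : ℕ) : ℕ :=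
  if p % 2 = 1 then p + 1
  else if p = 4 ∨ p % 4 = 2 then p + 2
  else if p = 8 then p + 3
  else p + 4

lemma f_le (p : ℕ) : f p ≤ p + 4 := by
  unfold f; split_ifs <;> omega

lemma f_ge (p : ℕ) : 1 ≤ f p := by
  unfold f; split_ifs <;> omega

lemma two_p_bound : ∀ p : ℕ, 5 ≤ p → 2 * p + 8 ≤ 2 ^ p := by
  intro p hp
  induction p, hp using Nat.le_induction with
  | base => norm_num
  | succ n hn ih =>
    have : 2 ≤ 2 ^ n := Nat.one_lt_two_pow (by omega)
    rw [pow_succ]; omega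

lemma sum_upper : ∀ p : ℕ, 7 ≤ p → 2 * (∑ k ∈ Finset.Icc 4 (p - 1), f k) + 6 ≤ 2 ^ p := by
  intro p hp
  induction p, hp using Nat.le_induction with
  | base => norm_num [Finset.sum_Icc_succ_top, f]
  | succ n hn ih =>
    have hn1 : n + 1 - 1 = (n - 1) + 1 := by omega
    rw [hn1, Finset.sum_Icc_succ_top (by omega : 4 ≤ n - 1 + 1)]
    have h1 : f (n - 1 + 1) ≤ (n - 1 + 1) + 4 := f_le _
    have h2 : 2 * n + 8 ≤ 2 ^ n := two_p_bound n (by omega)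
    rw [pow_succ]
    omega

lemma sum_lower : ∀ p : ℕ, 7 ≤ p → p + 4 ≤ ∑ k ∈ Finset.Icc 4 (p - 1), f k := by
  intro p hp
  induction p, hp using Nat.le_induction with
  | base => norm_num [Finset.sum_Icc_succ_top, f]
  | succ n hn ih =>
    have hn1 : n + 1 - 1 = (n - 1) + 1 := by omega
    rw [hn1, Finset.sum_Icc_succ_top (by omega : 4 ≤ n - 1 + 1)]
    have := f_ge (n - 1 + 1)
    omega

theorem stmt_11 (p : ℕ) (hp : 7 ≤ p) :
    Set.Icc (∑ k ∈ Finset.Icc 4 p, f k) (f p + (2 ^ p - 6)) ∪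
    Set.Icc (2 * ∑ k ∈ Finset.Icc 4 (p - 1), f k) (2 ^ (p + 1) - 12) ∪
    Set.Icc (2 ^ p + ∑ k ∈ Finset.Icc 4 (p - 1), f k) (2 ^ (p + 1) - 6) =
    Set.Icc (∑ k ∈ Finset.Icc 4 p, f k) (2 ^ (p + 1) - 6) := by
  have hsplit : ∑ k ∈ Finset.Icc 4 p, f k = (∑ k ∈ Finset.Icc 4 (p - 1), f k) + f p := by
    have : p = (p - 1) + 1 := by omega
    rw [this, Finset.sum_Icc_succ_top (by omega : 4 ≤ p - 1 + 1), Nat.add_sub_cancel]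
  have h1 := sum_upper p hp
  have h2 := sum_lower p hp
  have h3 := f_le p
  have h4 := f_ge p
  have hP : (128 : ℕ) ≤ 2 ^ p := by
    calc (128 : ℕ) = 2 ^ 7 := by norm_num
    _ ≤ 2 ^ p := Nat.pow_le_pow_right (by norm_num) hp
  have h2p : 2 ^ (p + 1) = 2 * 2 ^ p := by rw [pow_succ]; ring
  ext x
  simp only [Set.mem_union, Set.mem_Icc, hsplit, h2p]
  omega
end

section
/- Suppose there exist p-qubit UPBs of every size s with L ≤ s ≤ 2^p − 6 (where L = ∑_{k=4}^{p-1} f(k)), a p-qubit UPB of size f(p), and a p-qubit UPB of size 2^p. If combining a p-qubit UPB of size s₁ with one of size s₂ always yields a (p+1)-qubit UPB of size s₁ + s₂, then there exist (p+1)-qubit UPBs of every size s with ∑_{k=4}^{p} f(k) ≤ s ≤ 2^{p+1} − 6, for all p ≥ 7. -/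
lemma f_bounds (p : ℕ) : p + 1 ≤ f p ∧ f p ≤ p + 4 := by
  unfold f; split_ifs <;> omega

lemma aux_pow (m : ℕ) (hm : 6 ≤ m) : m + 5 ≤ 2 ^ m := by
  induction m with
  | zero => omega
  | succ n ih =>
    rcases Nat.lt_or_ge n 6 with h | h
    · interval_cases n <;> simp_all
    · have := ih h
      have : 2 ^ (n + 1) = 2 * 2 ^ n := by ring
      omega

lemma sum_f_le (m : ℕ) (hm : 6 ≤ m) : (∑ k ∈ Finset.Icc 4 m, f k) ≤ 2 ^ m := by
  induction m with
  | zero => omega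
  | succ n ih =>
    rcases Nat.lt_or_ge n 6 with h | h
    · have hn : n = 5 := by omega
      subst hn
      decide
    · have h1 := ih h
      have h2 : (∑ k ∈ Finset.Icc 4 (n + 1), f k)
          = (∑ k ∈ Finset.Icc 4 n, f k) + f (n + 1) :=
        Finset.sum_Icc_succ_top (by omega) f
      have h3 := f_bounds (n + 1)
      have h4 := aux_pow n h
      have h5 : 2 ^ (n + 1) = 2 * 2 ^ n := by ring
      omega

theorem stmt_13 (E : ℕ → Set ℕ) (p : ℕ) (hp : 7 ≤ p)
    (hclose : ∀ s₁ ∈ E p, ∀ s₂ ∈ E p, s₁ + s₂ ∈ E (p + 1))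
    (hmin : f p ∈ E p) (hmax : 2 ^ p ∈ E p)
    (hrange : ∀ s, (∑ k ∈ Finset.Icc 4 (p - 1), f k) ≤ s → s ≤ 2 ^ p - 6 → s ∈ E p) :
    ∀ s, (∑ k ∈ Finset.Icc 4 p, f k) ≤ s → s ≤ 2 ^ (p + 1) - 6 → s ∈ E (p + 1) := by
  obtain ⟨m, rfl⟩ : ∃ m, p = m + 1 := ⟨p - 1, by omega⟩
  have hm : 6 ≤ m := by omega
  intro s h1 h2
  set L := ∑ k ∈ Finset.Icc 4 m, f k with hL
  have hsplit : (∑ k ∈ Finset.Icc 4 (m + 1), f k) = L + f (m + 1) :=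
    Finset.sum_Icc_succ_top (by omega) f
  have hpred : m + 1 - 1 = m := rfl
  rw [hsplit] at h1
  rw [hpred] at hrange
  have hLle : L ≤ 2 ^ m := sum_f_le m hm
  have hf := f_bounds (m + 1)
  have h64 : 64 ≤ 2 ^ m := by calc 64 = 2 ^ 6 := by norm_num
                                  _ ≤ 2 ^ m := Nat.pow_le_pow_right (by norm_num) hm
  have hp1 : 2 ^ (m + 1) = 2 * 2 ^ m := by ring
  have hp2 : 2 ^ (m + 1 + 1) = 2 * 2 ^ (m + 1) := by ring
  rcases le_or_gt s (2 ^ (m + 1) - 6 + f (m + 1)) with hc1 | hc1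
  · -- s = f(m+1) + (s - f(m+1))
    have hs : f (m + 1) + (s - f (m + 1)) = s := by omega
    rw [← hs]
    exact hclose _ hmin _ (hrange _ (by omega) (by omega))
  rcases le_or_gt s (L + 2 ^ (m + 1) - 6) with hc2 | hc2
  · have hs : L + (s - L) = s := by omega
    rw [← hs]
    exact hclose _ (hrange _ le_rfl (by omega)) _ (hrange _ (by omega) (by omega))
  rcases le_or_gt s (2 ^ (m + 1 + 1) - 12) with hc3 | hc3
  · have hs : (s - (2 ^ (m + 1) - 6)) + (2 ^ (m + 1) - 6) = s := by omega
    rw [← hs]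
    exact hclose _ (hrange _ (by omega) (by omega)) _ (hrange _ (by omega) (by omega))
  · have hs : 2 ^ (m + 1) + (s - 2 ^ (m + 1)) = s := by omega
    rw [← hs]
    exact hclose _ hmax _ (hrange _ (by omega) (by omega))
end
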